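/- Let f : ℝⁿ → ℝ be a polynomial of degree d ≥ 2 and let ξ(t) = Σ_{-(d-1)d^{n-1} ≤ k ≤ d^{n-1}} a_k t^k be a rational arc satisfying: (a') Σ_{k>0} Σ_j a_{kj}² = 1; (b') f(ξ(t)) = b₀ + Σ_{k≥1} b_k t^{-k}; (d') x_j(∂f/∂x_i)(ξ(t)) = Σ_{k≥1} d_{ijk} t^{-k} for all i,j. Then b₀ ∈ K_∞(f), i.e., b₀ is an asymptotic critical value of f. -/

import Mathlib

open Filter Topology MvPolynomial Set

noncomputable section

/-- The polynomial function `ℝⁿ → ℝ` associated to `P`. -/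
def fe (n : ℕ) (P : MvPolynomial (Fin n) ℝ) (x : EuclideanSpace ℝ (Fin n)) : ℝ :=
  MvPolynomial.eval (fun j => x j) P

/-- `K_∞(f)`: asymptotic critical (Malgrange nonregular) values of `f : ℝⁿ → ℝ`. -/
def Kinf1 (n : ℕ) (P : MvPolynomial (Fin n) ℝ) : Set ℝ :=
  {c | ∃ x : ℕ → EuclideanSpace ℝ (Fin n),
    Tendsto (fun m => ‖x m‖) atTop atTop ∧
    Tendsto (fun m => fe n P (x m)) atTop (𝓝 c) ∧
    Tendsto (fun m => ‖x m‖ * ‖gradient (fe n P) (x m)‖) atTop (𝓝 0)}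

/-!
Along the arc, the positive-order part of `ξ` is nonzero by (a'), so its leading term makes
`‖ξ(t)‖ → ∞`; by (b') `f(ξ(t)) → b₀`; and `‖ξ‖ · ‖grad f(ξ)‖` is the square root of
`Σᵢⱼ (ξⱼ ∂ᵢf(ξ))²`, which tends to `0` by (d'). Sampling the arc at `t = m` gives the sequence
witnessing `b₀ ∈ K_∞(f)`.
-/

lemma tendsto_of_eq_add_sum_zpow_neg {f : ℝ → ℝ} {c : ℝ} (s : Finset ℕ) (a : ℕ → ℝ)
    (hs : ∀ k ∈ s, 1 ≤ k) (hf : ∀ t : ℝ, t ≠ 0 → f t = c + ∑ k ∈ s, a k * t ^ (-(k : ℤ))) :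
    Tendsto f atTop (𝓝 c) := by
  have hterm : ∀ k ∈ s, Tendsto (fun t : ℝ => a k * t ^ (-(k : ℤ))) atTop (𝓝 0) := fun k hk => by
    have hneg : -(k : ℤ) < 0 := by have := hs k hk; omega
    simpa only [mul_zero] using (tendsto_zpow_atTop_zero hneg).const_mul (a k)
  have htail := (tendsto_finsetSum s hterm).const_add c
  rw [Finset.sum_const_zero, add_zero] at htail
  refine htail.congr' ?_
  filter_upwards [eventually_ne_atTop 0] with t ht
  exact (hf t ht).symm

lemma tendsto_norm_sum_zpow_smul_atTop {E : Type*} [NormedAddCommGroup E] [NormedSpace ℝ E]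
    (S : Finset ℤ) (A : ℤ → E) (h : ∃ k ∈ S, 0 < k ∧ A k ≠ 0) :
    Tendsto (fun t : ℝ => ‖∑ k ∈ S, t ^ k • A k‖) atTop atTop := by
  classical
  obtain ⟨k₀, hk₀S, hk₀pos, hk₀ne⟩ := h
  set T := S.filter (fun k => A k ≠ 0)
  have hk₀T : k₀ ∈ T := Finset.mem_filter.2 ⟨hk₀S, hk₀ne⟩
  have hT : T.Nonempty := ⟨k₀, hk₀T⟩
  set K := T.max' hT
  obtain ⟨hKS, hAK⟩ := Finset.mem_filter.1 (T.max'_mem hT)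
  have hKpos : 0 < K := hk₀pos.trans_le (T.le_max' k₀ hk₀T)
  have hlower : ∀ k ∈ S.erase K, Tendsto (fun t : ℝ => t ^ (k - K) • A k) atTop (𝓝 0) := by
    intro k hk
    obtain ⟨hkK, hkS⟩ := Finset.mem_erase.1 hk
    by_cases hAk : A k = 0
    · simp [hAk]
    · have hlt : k < K := lt_of_le_of_ne (T.le_max' k (Finset.mem_filter.2 ⟨hkS, hAk⟩)) hkK
      simpa using (tendsto_zpow_atTop_zero (𝕜 := ℝ) (by omega : k - K < 0)).smul_const (A k)
  have hlead : Tendsto (fun t : ℝ => ∑ k ∈ S, t ^ (k - K) • A k) atTop (𝓝 (A K)) := by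
    have hsplit : ∀ t : ℝ, ∑ k ∈ S, t ^ (k - K) • A k =
        A K + ∑ k ∈ S.erase K, t ^ (k - K) • A k := fun t => by
      rw [← Finset.add_sum_erase S _ hKS, sub_self, zpow_zero, one_smul]
    simp only [hsplit]
    simpa only [Finset.sum_const_zero, add_zero] using
      (tendsto_finsetSum _ hlower).const_add (A K)
  have hfactor : ∀ t : ℝ, 0 < t →
      ‖∑ k ∈ S, t ^ k • A k‖ = t ^ K * ‖∑ k ∈ S, t ^ (k - K) • A k‖ := by
    intro t ht
    rw [← abs_of_pos (zpow_pos ht K), ← Real.norm_eq_abs, ← norm_smul, Finset.smul_sum]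
    simp_rw [smul_smul, ← zpow_add₀ ht.ne', add_sub_cancel]
  refine ((tendsto_zpow_atTop_atTop hKpos).atTop_mul_pos (norm_pos_iff.2 hAK)
    hlead.norm).congr' ?_
  filter_upwards [eventually_gt_atTop 0] with t ht
  exact (hfactor t ht).symm

lemma hasFDerivAt_fe (n : ℕ) (P : MvPolynomial (Fin n) ℝ) (x : EuclideanSpace ℝ (Fin n)) :
    HasFDerivAt (fe n P)
      (∑ i, MvPolynomial.eval (fun j => x j) (MvPolynomial.pderiv i P) •
        (EuclideanSpace.proj i : EuclideanSpace ℝ (Fin n) →L[ℝ] ℝ)) x := by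
  induction P using MvPolynomial.induction_on with
  | C a =>
      simp only [pderiv_C, map_zero, zero_smul, Finset.sum_const_zero]
      have h : fe n (C a) = fun _ => a := by funext y; simp [fe]
      rw [h]
      exact hasFDerivAt_const a x
  | add p q hp hq =>
      have h : fe n (p + q) = fun y => fe n p y + fe n q y := by funext y; simp [fe]
      rw [h]
      refine (hp.add hq).congr_fderiv ?_
      rw [← Finset.sum_add_distrib]
      refine Finset.sum_congr rfl fun i _ => ?_
      simp [add_smul]
  | mul_X p i hp =>
      have h : fe n (p * X i) = fun y => fe n p y * y i := by
        funext y; simp [fe]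
      rw [h]
      refine (hp.mul (EuclideanSpace.proj i).hasFDerivAt).congr_fderiv ?_
      ext v
      simp only [sum_apply, smul_apply, add_apply, PiLp.proj_apply, smul_eq_mul,
        Derivation.leibniz, pderiv_X, map_add, map_mul, eval_X, Pi.single_apply,
        apply_ite (MvPolynomial.eval fun j => x j), map_one, map_zero, add_mul]
      rw [Finset.sum_add_distrib]
      congr 1
      · simp [mul_ite, ite_mul, fe]
      · rw [Finset.mul_sum]
        exact Finset.sum_congr rfl fun j _ => by ring

lemma gradient_fe (n : ℕ) (P : MvPolynomial (Fin n) ℝ) (x : EuclideanSpace ℝ (Fin n)) :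
    gradient (fe n P) x =
      WithLp.toLp 2 (fun i => MvPolynomial.eval (fun j => x j) (MvPolynomial.pderiv i P)) := by
  apply HasGradientAt.gradient
  rw [hasGradientAt_iff_hasFDerivAt]
  refine (hasFDerivAt_fe n P x).congr_fderiv ?_
  ext v
  simp [PiLp.inner_apply, mul_comm]

lemma norm_mul_norm_gradient_fe (n : ℕ) (P : MvPolynomial (Fin n) ℝ)
    (x : EuclideanSpace ℝ (Fin n)) :
    ‖x‖ * ‖gradient (fe n P) x‖ =
      √(∑ j, ∑ i, (x j * MvPolynomial.eval (fun l => x l) (MvPolynomial.pderiv i P)) ^ 2) := by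
  rw [gradient_fe, EuclideanSpace.norm_eq, EuclideanSpace.norm_eq,
    ← Real.sqrt_mul (by positivity), Finset.sum_mul_sum]
  simp [Real.norm_eq_abs, sq_abs, mul_pow]

lemma tendsto_norm_mul_norm_gradient_fe {α : Type*} {l : Filter α} (n : ℕ)
    (P : MvPolynomial (Fin n) ℝ) (x : α → EuclideanSpace ℝ (Fin n))
    (h : ∀ i j, Tendsto (fun a => x a j *
      MvPolynomial.eval (fun m => x a m) (MvPolynomial.pderiv i P)) l (𝓝 0)) :
    Tendsto (fun a => ‖x a‖ * ‖gradient (fe n P) (x a)‖) l (𝓝 0) := by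
  simp_rw [norm_mul_norm_gradient_fe]
  have hsum := tendsto_finsetSum (Finset.univ : Finset (Fin n)) fun j _ =>
    tendsto_finsetSum (Finset.univ : Finset (Fin n)) fun i _ => (h i j).pow 2
  simpa using hsum.sqrt

lemma mem_Kinf1_of_tendsto_atTop {n : ℕ} {P : MvPolynomial (Fin n) ℝ} {c : ℝ}
    {ξ : ℝ → EuclideanSpace ℝ (Fin n)}
    (hnorm : Tendsto (fun t => ‖ξ t‖) atTop atTop)
    (hval : Tendsto (fun t => fe n P (ξ t)) atTop (𝓝 c))
    (hgrad : Tendsto (fun t => ‖ξ t‖ * ‖gradient (fe n P) (ξ t)‖) atTop (𝓝 0)) :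
    c ∈ Kinf1 n P :=
  ⟨fun m : ℕ => ξ m, hnorm.comp tendsto_natCast_atTop_atTop,
    hval.comp tendsto_natCast_atTop_atTop, hgrad.comp tendsto_natCast_atTop_atTop⟩

theorem arc_gives_asymptotic_critical_value_general (n d : ℕ)
    (P : MvPolynomial (Fin n) ℝ)
    (A : ℤ → EuclideanSpace ℝ (Fin n)) (ξ : ℝ → EuclideanSpace ℝ (Fin n))
    (hξ : ∀ t : ℝ, ξ t =
      ∑ k ∈ Finset.Icc (-(((d : ℤ) - 1) * (d : ℤ) ^ (n - 1))) ((d : ℤ) ^ (n - 1)),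
        t ^ k • A k)
    (ha' : ∑ k ∈ (Finset.Icc (-(((d : ℤ) - 1) * (d : ℤ) ^ (n - 1)))
        ((d : ℤ) ^ (n - 1))).filter (fun k => 0 < k), ∑ j : Fin n, (A k j) ^ 2 = 1)
    (b₀ : ℝ) (sb : Finset ℕ) (b : ℕ → ℝ) (hsb : ∀ k ∈ sb, 1 ≤ k)
    (hb' : ∀ t : ℝ, t ≠ 0 →
      fe n P (ξ t) = b₀ + ∑ k ∈ sb, b k * t ^ (-(k : ℤ)))
    (hd' : ∀ i j : Fin n, ∃ (sd : Finset ℕ) (dd : ℕ → ℝ), (∀ k ∈ sd, 1 ≤ k) ∧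
      ∀ t : ℝ, t ≠ 0 →
        ξ t j * MvPolynomial.eval (fun l => ξ t l) (MvPolynomial.pderiv i P) =
          ∑ k ∈ sd, dd k * t ^ (-(k : ℤ))) :
    b₀ ∈ Kinf1 n P := by
  have hpos : ∃ k ∈ Finset.Icc (-(((d : ℤ) - 1) * (d : ℤ) ^ (n - 1))) ((d : ℤ) ^ (n - 1)),
      0 < k ∧ A k ≠ 0 := by
    by_contra! hzero
    refine one_ne_zero (ha'.symm.trans (Finset.sum_eq_zero fun k hk => ?_))
    obtain ⟨hkS, hk⟩ := Finset.mem_filter.1 hk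
    simp [hzero k hkS hk]
  refine mem_Kinf1_of_tendsto_atTop ?_ (tendsto_of_eq_add_sum_zpow_neg sb b hsb hb')
    (tendsto_norm_mul_norm_gradient_fe n P ξ fun i j => ?_)
  · simpa only [hξ] using tendsto_norm_sum_zpow_smul_atTop _ A hpos
  · obtain ⟨sd, dd, hsd, hdd⟩ := hd' i j
    exact tendsto_of_eq_add_sum_zpow_neg sd dd hsd fun t ht => (hdd t ht).trans (zero_add _).symm

/-- If the rational arc `ξ(t) = Σ_{-(d-1)d^{n-1} ≤ k ≤ d^{n-1}} aₖ tᵏ` satisfies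
(a') `Σ_{k>0} Σⱼ a_{kj}² = 1`, (b') `f(ξ(t)) = b₀ + Σ_{k≥1} bₖ t^{-k}`, and
(d') `ξⱼ(t) ∂f/∂xᵢ(ξ(t)) = Σ_{k≥1} d_{ijk} t^{-k}` for all `i, j`,
then `b₀ ∈ K_∞(f)`. -/
theorem arc_gives_asymptotic_critical_value (n d : ℕ) (hd : 2 ≤ d)
    (P : MvPolynomial (Fin n) ℝ) (hdeg : P.totalDegree = d)
    (A : ℤ → EuclideanSpace ℝ (Fin n)) (ξ : ℝ → EuclideanSpace ℝ (Fin n))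
    (hξ : ∀ t : ℝ, ξ t =
      ∑ k ∈ Finset.Icc (-(((d : ℤ) - 1) * (d : ℤ) ^ (n - 1))) ((d : ℤ) ^ (n - 1)),
        t ^ k • A k)
    (ha' : ∑ k ∈ (Finset.Icc (-(((d : ℤ) - 1) * (d : ℤ) ^ (n - 1)))
        ((d : ℤ) ^ (n - 1))).filter (fun k => 0 < k), ∑ j : Fin n, (A k j) ^ 2 = 1)
    (b₀ : ℝ) (sb : Finset ℕ) (b : ℕ → ℝ) (hsb : ∀ k ∈ sb, 1 ≤ k)
    (hb' : ∀ t : ℝ, t ≠ 0 →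
      fe n P (ξ t) = b₀ + ∑ k ∈ sb, b k * t ^ (-(k : ℤ)))
    (hd' : ∀ i j : Fin n, ∃ (sd : Finset ℕ) (dd : ℕ → ℝ), (∀ k ∈ sd, 1 ≤ k) ∧
      ∀ t : ℝ, t ≠ 0 →
        ξ t j * MvPolynomial.eval (fun l => ξ t l) (MvPolynomial.pderiv i P) =
          ∑ k ∈ sd, dd k * t ^ (-(k : ℤ))) :
    b₀ ∈ Kinf1 n P :=
  arc_gives_asymptotic_critical_value_general n d P A ξ hξ ha' b₀ sb b hsb hb' hd'
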